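/- arXiv:2604.19045 — 6 statements merged into one kernel-verified Lean document; each statement's English description precedes it below -/
import Mathlib

section
/- For every ε > 0 there exists a constant C(ε) such that for all positive integers r and all real T ≥ 1, the number of positive integers n ≤ T whose squarefree kernel (radical) divides r is at most C(ε)·(rT)^ε. -/
open Finset

private lemma geom_tail_le {x : ℝ} (h0 : 0 ≤ x) (h1 : x < 1) (n : ℕ) :
    ∑ i ∈ range n, x ^ i ≤ (1 - x)⁻¹ := by
  have hx : (0:ℝ) < 1 - x := by linarith
  calc ∑ i ∈ range n, x ^ i = (1 - x^n)/(1-x) := by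
        rw [geom_sum_eq h1.ne n]; rw [← neg_div_neg_eq]; ring_nf
    _ ≤ 1/(1-x) := by
        have := pow_nonneg h0 n
        gcongr
        linarith
    _ = (1-x)⁻¹ := one_div _

/-- The arithmetic function `d ↦ d ^ (-ε)`. -/
private noncomputable def radF (ε : ℝ) (hε : ε ≠ 0) : ArithmeticFunction ℝ :=
  ⟨fun d => (d : ℝ) ^ (-ε), by simp [Real.zero_rpow (neg_ne_zero.mpr hε)]⟩

private lemma radF_apply (ε : ℝ) (hε : ε ≠ 0) (d : ℕ) : radF ε hε d = (d : ℝ) ^ (-ε) := rfl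

private lemma radF_mult (ε : ℝ) (hε : ε ≠ 0) : (radF ε hε).IsMultiplicative := by
  constructor
  · simp [radF]
  · intro m n _
    simp only [radF, ArithmeticFunction.coe_mk, Nat.cast_mul]
    exact Real.mul_rpow (Nat.cast_nonneg m) (Nat.cast_nonneg n)

/-- Sum of `d^(-ε)` over divisors, bounded by the Euler-type product. -/
private lemma sum_divisors_rpow_le (ε : ℝ) (hε : 0 < ε) (m : ℕ) (hm : m ≠ 0) :
    ∑ d ∈ m.divisors, (d : ℝ) ^ (-ε)
      ≤ ∏ p ∈ m.primeFactors, (1 - (p : ℝ) ^ (-ε))⁻¹ := by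
  have key : ∑ d ∈ m.divisors, (d : ℝ) ^ (-ε)
      = ∏ p ∈ m.primeFactors, ∑ i ∈ range (m.factorization p + 1), ((p : ℝ) ^ (-ε)) ^ i := by
    have h1 : ∑ d ∈ m.divisors, (d : ℝ) ^ (-ε)
        = ((radF ε hε.ne') * ArithmeticFunction.zeta) m := by
      rw [ArithmeticFunction.coe_mul_zeta_apply]
      simp [radF_apply]
    rw [h1, ArithmeticFunction.IsMultiplicative.multiplicative_factorization _
      ((radF_mult ε hε.ne').mul ArithmeticFunction.isMultiplicative_zeta.natCast) hm,
      Finsupp.prod, Nat.support_factorization]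
    refine Finset.prod_congr rfl fun p hp => ?_
    have hpp : p.Prime := Nat.prime_of_mem_primeFactors hp
    rw [ArithmeticFunction.coe_mul_zeta_apply, Nat.sum_divisors_prime_pow hpp]
    refine Finset.sum_congr rfl fun i _ => ?_
    rw [radF_apply, Nat.cast_pow, ← Real.rpow_natCast (p : ℝ) i, ← Real.rpow_mul (by positivity),
      mul_comm, Real.rpow_mul (by positivity), Real.rpow_natCast]
  rw [key]
  refine Finset.prod_le_prod (fun p _ => Finset.sum_nonneg fun i _ => by positivity)
    (fun p hp => ?_)
  have hpp : p.Prime := Nat.prime_of_mem_primeFactors hp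
  have hp1 : (1:ℝ) < p := by exact_mod_cast hpp.one_lt
  exact geom_tail_le (by positivity) (Real.rpow_lt_one_of_one_lt_of_neg hp1 (by linarith)) _

/-- For every ε > 0 there is C(ε) such that for all r ≥ 1 and T ≥ 1, the number of
positive integers n ≤ T whose squarefree kernel (radical) divides r is at most C(ε)·(rT)^ε. -/
theorem stmt0 :
    ∀ ε : ℝ, 0 < ε → ∃ C : ℝ, 0 < C ∧ ∀ r : ℕ, 0 < r → ∀ T : ℝ, 1 ≤ T →
      (((Finset.Icc 1 ⌊T⌋₊).filter (fun n => (∏ p ∈ n.primeFactors, p) ∣ r)).card : ℝ)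
        ≤ C * ((r : ℝ) * T) ^ ε := by
  intro ε hε
  -- the threshold N and constant c
  obtain ⟨N, hN⟩ := exists_nat_gt ((2:ℝ) ^ (1/ε))
  have h2e : (0:ℝ) < (2:ℝ) ^ (-ε) := by positivity
  have h2e1 : (2:ℝ) ^ (-ε) < 1 := Real.rpow_lt_one_of_one_lt_of_neg one_lt_two (by linarith)
  set c : ℝ := (1 - (2:ℝ) ^ (-ε))⁻¹ with hc
  have hcpos : 0 < c := inv_pos.mpr (by linarith)
  have hc1 : 1 ≤ c := by
    have hmc : (1 - (2:ℝ) ^ (-ε)) * c = 1 := mul_inv_cancel₀ (by linarith)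
    nlinarith
  have hN2 : (2:ℝ) ≤ (N:ℝ) ^ ε := by
    have h2 : ((2:ℝ) ^ (1/ε)) ^ ε = 2 := by
      rw [← Real.rpow_mul (by norm_num), one_div_mul_cancel hε.ne', Real.rpow_one]
    calc (2:ℝ) = ((2:ℝ) ^ (1/ε)) ^ ε := h2.symm
      _ ≤ (N:ℝ) ^ ε := Real.rpow_le_rpow (by positivity) hN.le hε.le
  refine ⟨c ^ N, pow_pos hcpos N, ?_⟩
  intro r hr T hT
  set S := (Finset.Icc 1 ⌊T⌋₊).filter (fun n => (∏ p ∈ n.primeFactors, p) ∣ r) with hS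
  set K := ⌊T⌋₊ with hK
  have hK1 : 1 ≤ K := (Nat.one_le_floor_iff T).mpr hT
  have hrK : r ^ K ≠ 0 := pow_ne_zero _ hr.ne'
  -- Step A: each n in S divides r ^ K
  have hdvd : ∀ n ∈ S, n ∣ r ^ K := by
    intro n hn
    simp only [hS, Finset.mem_filter, Finset.mem_Icc] at hn
    obtain ⟨⟨hn1, hnK⟩, hrad⟩ := hn
    have hn0 : n ≠ 0 := by omega
    rw [← Nat.factorization_le_iff_dvd hn0 hrK]
    intro p
    rw [Nat.factorization_pow]
    by_cases hp : p ∈ n.primeFactors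
    · have hpr : p ∣ r := (Finset.dvd_prod_of_mem _ hp).trans hrad
      have h1 : 1 ≤ r.factorization p :=
        (Nat.Prime.factorization_pos_of_dvd (Nat.prime_of_mem_primeFactors hp) hr.ne' hpr)
      have h2 : n.factorization p < n := Nat.factorization_lt p hn0
      have : n.factorization p ≤ K * 1 := by omega
      calc n.factorization p ≤ K * 1 := this
        _ ≤ K * r.factorization p := Nat.mul_le_mul_left K h1
        _ = (K • r.factorization) p := by simp
    · have h0 : n.factorization p = 0 := by
        rw [← Nat.support_factorization] at hp
        exact Finsupp.notMem_support_iff.mp hp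
      simp [h0]
  -- Step B: Rankin's trick
  have hTpos : (0:ℝ) < T := by linarith
  have step1 : (S.card : ℝ) ≤ T ^ ε * ∑ n ∈ S, (n : ℝ) ^ (-ε) := by
    have hcard : (S.card : ℝ) = ∑ _n ∈ S, (1:ℝ) := by simp
    rw [hcard, Finset.mul_sum]
    refine Finset.sum_le_sum fun n hn => ?_
    simp only [hS, Finset.mem_filter, Finset.mem_Icc] at hn
    obtain ⟨⟨hn1, hnK⟩, -⟩ := hn
    have hn0 : (0:ℝ) < n := by exact_mod_cast hn1
    have hnT : (n : ℝ) ≤ T := le_trans (by exact_mod_cast hnK) (Nat.floor_le hTpos.le)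
    have heq : T ^ ε * (n:ℝ) ^ (-ε) = (T / n) ^ ε := by
      rw [Real.div_rpow hTpos.le (le_of_lt hn0), Real.rpow_neg (le_of_lt hn0), div_eq_mul_inv]
    rw [heq]
    exact Real.one_le_rpow ((le_div_iff₀ hn0).mpr (by linarith)) hε.le
  have step2 : ∑ n ∈ S, (n : ℝ) ^ (-ε) ≤ ∑ d ∈ (r ^ K).divisors, (d : ℝ) ^ (-ε) := by
    refine Finset.sum_le_sum_of_subset_of_nonneg ?_ (fun d _ _ => by positivity)
    intro n hn
    rw [Nat.mem_divisors]
    exact ⟨hdvd n hn, hrK⟩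
  have step3 := sum_divisors_rpow_le ε hε (r ^ K) hrK
  rw [Nat.primeFactors_pow r (by omega : K ≠ 0)] at step3
  -- Step E: bounding the Euler-type product
  have hfac : ∀ p ∈ r.primeFactors, (0:ℝ) < 1 - (p:ℝ) ^ (-ε) := by
    intro p hp
    have hp1 : (1:ℝ) < p := by exact_mod_cast (Nat.prime_of_mem_primeFactors hp).one_lt
    have := Real.rpow_lt_one_of_one_lt_of_neg hp1 (by linarith : -ε < 0)
    linarith
  have stepE : ∏ p ∈ r.primeFactors, (1 - (p : ℝ) ^ (-ε))⁻¹ ≤ c ^ N * (r : ℝ) ^ ε := by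
    rw [← Finset.prod_filter_mul_prod_filter_not r.primeFactors (fun p => p < N)]
    have hsmall : ∏ p ∈ r.primeFactors.filter (fun p => p < N), (1 - (p : ℝ) ^ (-ε))⁻¹
        ≤ c ^ N := by
      calc ∏ p ∈ r.primeFactors.filter (fun p => p < N), (1 - (p : ℝ) ^ (-ε))⁻¹
          ≤ ∏ _p ∈ r.primeFactors.filter (fun p => p < N), c := by
            refine Finset.prod_le_prod (fun p hp => inv_nonneg.mpr
              (hfac p (Finset.mem_of_mem_filter p hp)).le) (fun p hp => ?_)
            have hp' := Finset.mem_of_mem_filter p hp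
            have hp2 : (2:ℝ) ≤ p := by exact_mod_cast (Nat.prime_of_mem_primeFactors hp').two_le
            have hpe : (2:ℝ)^ε ≤ (p:ℝ)^ε := Real.rpow_le_rpow (by norm_num) hp2 hε.le
            have h2pos : (0:ℝ) < (2:ℝ)^ε := by positivity
            have hmono : (p:ℝ)^(-ε) ≤ (2:ℝ)^(-ε) := by
              rw [Real.rpow_neg (by positivity), Real.rpow_neg (by norm_num)]
              exact inv_anti₀ h2pos hpe
            rw [hc]
            have h1p := hfac p hp'
            exact inv_anti₀ (by linarith) (by linarith)
        _ = c ^ (r.primeFactors.filter (fun p => p < N)).card := Finset.prod_const c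
        _ ≤ c ^ N := by
            refine pow_le_pow_right₀ hc1 ?_
            calc (r.primeFactors.filter (fun p => p < N)).card
                ≤ (Finset.range N).card := Finset.card_le_card (fun p hp => by
                  simp only [Finset.mem_filter] at hp
                  exact Finset.mem_range.mpr hp.2)
              _ = N := Finset.card_range N
    have hbig : ∏ p ∈ r.primeFactors.filter (fun p => ¬ p < N), (1 - (p : ℝ) ^ (-ε))⁻¹
        ≤ (r : ℝ) ^ ε := by
      calc ∏ p ∈ r.primeFactors.filter (fun p => ¬ p < N), (1 - (p : ℝ) ^ (-ε))⁻¹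
          ≤ ∏ p ∈ r.primeFactors.filter (fun p => ¬ p < N), (p : ℝ) ^ ε := by
            refine Finset.prod_le_prod (fun p hp => inv_nonneg.mpr
              (hfac p (Finset.mem_of_mem_filter p hp)).le) (fun p hp => ?_)
            simp only [Finset.mem_filter, not_lt] at hp
            obtain ⟨hp', hpN⟩ := hp
            have h2p : (2:ℝ) ≤ (p:ℝ)^ε :=
              le_trans hN2 (Real.rpow_le_rpow (by positivity) (by exact_mod_cast hpN) hε.le)
            have h1 : (0:ℝ) < 1 - (p:ℝ)^(-ε) := hfac p hp'
            have hinv : (p:ℝ)^(-ε) = ((p:ℝ)^ε)⁻¹ := Real.rpow_neg (by positivity) ε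
            have hmul : (p:ℝ)^ε * (p:ℝ)^(-ε) = 1 := by
              rw [hinv]; exact mul_inv_cancel₀ (by positivity)
            have hkey : 1 ≤ (p:ℝ)^ε * (1 - (p:ℝ)^(-ε)) := by nlinarith
            calc (1 - (p:ℝ)^(-ε))⁻¹ = (1 - (p:ℝ)^(-ε))⁻¹ * 1 := (mul_one _).symm
              _ ≤ (1 - (p:ℝ)^(-ε))⁻¹ * ((p:ℝ)^ε * (1 - (p:ℝ)^(-ε))) :=
                  mul_le_mul_of_nonneg_left hkey (inv_nonneg.mpr h1.le)
              _ = (p:ℝ)^ε := by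
                  rw [mul_comm ((p:ℝ)^ε), ← mul_assoc, inv_mul_cancel₀ h1.ne', one_mul]
        _ = (∏ p ∈ r.primeFactors.filter (fun p => ¬ p < N), (p : ℝ)) ^ ε :=
            Real.finset_prod_rpow _ _ (fun p _ => by positivity) ε
        _ ≤ (r : ℝ) ^ ε := by
            refine Real.rpow_le_rpow (Finset.prod_nonneg fun p _ => by positivity) ?_ hε.le
            have hdvd2 : (∏ p ∈ r.primeFactors.filter (fun p => ¬ p < N), p) ∣ r :=
              (Finset.prod_dvd_prod_of_subset _ _ _ (Finset.filter_subset _ _)).trans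
                (Nat.prod_primeFactors_dvd r)
            calc ∏ p ∈ r.primeFactors.filter (fun p => ¬ p < N), (p : ℝ)
                = ((∏ p ∈ r.primeFactors.filter (fun p => ¬ p < N), p : ℕ) : ℝ) := by
                  push_cast; ring
              _ ≤ (r : ℝ) := by exact_mod_cast Nat.le_of_dvd hr hdvd2
    exact mul_le_mul hsmall hbig (Finset.prod_nonneg fun p hp => inv_nonneg.mpr
      (hfac p (Finset.mem_of_mem_filter p hp)).le) (by positivity)
  -- assemble
  calc (S.card : ℝ) ≤ T ^ ε * ∑ n ∈ S, (n : ℝ) ^ (-ε) := step1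
    _ ≤ T ^ ε * (c ^ N * (r : ℝ) ^ ε) :=
        mul_le_mul_of_nonneg_left (le_trans step2 (le_trans step3 stepE)) (by positivity)
    _ = c ^ N * ((r : ℝ) * T) ^ ε := by
        rw [Real.mul_rpow (by positivity) (by positivity)]; ring
end

section
/- Let q be a positive integer and m an integer, and let η_q(m) denote the number of residues y modulo q with y² ≡ m (mod q). Then η_q(m) ≤ gcd(q,2) · 2^{ω(q)} · √{q,m}, where ω(q) is the number of distinct prime factors of q and {q,m} is the largest perfect square dividing gcd(q,m) (interpreting gcd(q,0) = q). -/
/-- `sqPart d` is the largest perfect square dividing `d`: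
∏_{p^j ∥ d} p^{2⌊j/2⌋}. -/
def sqPart (d : ℕ) : ℕ := ∏ p ∈ d.primeFactors, p ^ (2 * (d.factorization p / 2))

/-!
Counting square roots modulo `q` is multiplicative by the Chinese remainder theorem, so it
suffices to treat `q = p ^ k`. Put `g = gcd(p, 2)`. If `p ∤ m`, two roots `x, y` of `m`
satisfy `p ^ k ∣ g (x - y)` or `p ^ k ∣ g (x + y)`, because `p ^ k ∣ (x - y)(x + y)` while the
two factors share at most the factor `g` of `p`. If `p² ∣ m`, dividing `x, y, m` by `p, p, p²`
lowers `k` by two; if `p ∥ m` and `k ≥ 2` there are no roots. This yields `w` with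
`p ^ (2w) ∣ gcd(p ^ k, m)` such that all roots lie in two cosets of the `g p ^ w`-torsion of the
cyclic group `ZMod (p ^ k)`, which has at most `g p ^ w` elements. The product over `p ∣ q` of
the `p ^ w` has its square dividing `gcd(q, m)`, so it is at most `√{q, m}`.
-/

open Finset

theorem sqPart_ne_zero (d : ℕ) : sqPart d ≠ 0 :=
  prod_ne_zero_iff.mpr fun _ hp => pow_ne_zero _ (Nat.prime_of_mem_primeFactors hp).ne_zero

theorem factorization_sqPart (d p : ℕ) :
    (sqPart d).factorization p = 2 * (d.factorization p / 2) := by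
  rw [sqPart, Nat.factorization_prod fun q hq =>
      pow_ne_zero _ (Nat.prime_of_mem_primeFactors hq).ne_zero, sum_apply',
    sum_congr rfl fun q hq => by rw [(Nat.prime_of_mem_primeFactors hq).factorization_pow]]
  simp only [Finsupp.single_apply, sum_ite_eq']
  split_ifs with h
  · rfl
  · rw [Finsupp.notMem_support_iff.mp (by rwa [Nat.support_factorization])]
    rfl

theorem sq_dvd_sqPart {r d : ℕ} (hd : d ≠ 0) (h : r ^ 2 ∣ d) : r ^ 2 ∣ sqPart d := by
  have hr : r ^ 2 ≠ 0 := ne_zero_of_dvd_ne_zero hd h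
  refine (Nat.factorization_le_iff_dvd hr (sqPart_ne_zero d)).mp fun p => ?_
  have := (Nat.factorization_le_iff_dvd hr hd).mpr h p
  rw [factorization_sqPart]
  simp only [Nat.factorization_pow, Finsupp.smul_apply, smul_eq_mul] at this ⊢
  omega

theorem le_sqrt_sqPart {r d : ℕ} (hd : d ≠ 0) (h : r ^ 2 ∣ d) : r ≤ Nat.sqrt (sqPart d) :=
  Nat.le_sqrt'.mpr <| Nat.le_of_dvd (Nat.pos_of_ne_zero (sqPart_ne_zero d)) (sq_dvd_sqPart hd h)

theorem card_le_two_mul_of_forall_nsmul_sub_or_add {G : Type*} [AddCommGroup G] [Fintype G]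
    [DecidableEq G] [IsAddCyclic G] {d : ℕ} (hd : 0 < d) (s : Finset G)
    (h : ∀ x ∈ s, ∀ y ∈ s, d • (x - y) = 0 ∨ d • (x + y) = 0) : #s ≤ 2 * d := by
  rcases s.eq_empty_or_nonempty with rfl | ⟨y, hy⟩
  · simp
  set K : Finset G := {z | d • z = 0}
  have hK : #K ≤ d := by convert IsAddCyclic.card_nsmul_eq_zero_le (α := G) hd
  have hsub : s ⊆ K.image (· + y) ∪ K.image (· - y) := by
    intro x hx
    rcases h x hx y hy with h' | h'
    · exact mem_union_left _ <|
        mem_image.mpr ⟨x - y, by simpa [K] using h', sub_add_cancel x y⟩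
    · exact mem_union_right _ <|
        mem_image.mpr ⟨x + y, by simpa [K] using h', add_sub_cancel_right x y⟩
  calc #s ≤ #(K.image (· + y)) + #(K.image (· - y)) :=
        (card_le_card hsub).trans (card_union_le _ _)
    _ ≤ #K + #K := add_le_add card_image_le card_image_le
    _ ≤ 2 * d := by omega

noncomputable def sqrtCount (n : ℕ) (m : ℤ) : ℕ := Nat.card {x : ZMod n // x ^ 2 = m}

theorem sqrtCount_mul {a b : ℕ} (h : a.Coprime b) (m : ℤ) :
    sqrtCount (a * b) m = sqrtCount a m * sqrtCount b m := by
  let e := ZMod.chineseRemainder h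
  have he : ∀ x, x ^ 2 = (m : ZMod (a * b)) ↔ (e x).1 ^ 2 = m ∧ (e x).2 ^ 2 = m := fun x => by
    rw [← Prod.mk.injEq, ← Prod.pow_mk, ← e.injective.eq_iff, map_pow, map_intCast]
    rfl
  exact (Nat.card_congr ((e.toEquiv.subtypeEquiv he).trans
    (Equiv.subtypeProdEquivProd (p := fun u : ZMod a => u ^ 2 = m)
      (q := fun v : ZMod b => v ^ 2 = m)))).trans (Nat.card_prod _ _)

theorem ZMod.intCast_sq_eq_intCast_iff {n : ℕ} (x m : ℤ) :
    (x : ZMod n) ^ 2 = m ↔ x ^ 2 ≡ m [ZMOD n] := by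
  rw [← Int.cast_pow, ZMod.intCast_eq_intCast_iff]

theorem card_filter_range_eq_sqrtCount (n : ℕ) [NeZero n] (m : ℤ) :
    ((range n).filter fun y : ℕ => (y : ℤ) ^ 2 % n = m % n).card = sqrtCount n m := by
  rw [sqrtCount, Nat.card_eq_fintype_card, Fintype.card_subtype]
  have hmem : ∀ y : ℕ, (y : ℤ) ^ 2 % n = m % n ↔ (y : ZMod n) ^ 2 = m := fun y => by
    have := ZMod.intCast_sq_eq_intCast_iff (n := n) y m
    rw [Int.cast_natCast] at this
    exact this.symm
  refine card_bij' (fun y _ => (y : ZMod n)) (fun x _ => x.val) ?_ ?_ ?_ ?_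
  · intro y hy
    simp only [mem_filter, mem_univ, true_and] at hy ⊢
    exact (hmem y).mp hy.2
  · intro x hx
    simp only [mem_filter, mem_range, mem_univ, true_and] at hx ⊢
    exact ⟨x.val_lt, (hmem _).mpr (by rwa [ZMod.natCast_zmod_val])⟩
  · intro y hy
    exact ZMod.val_cast_of_lt (mem_range.mp (mem_filter.mp hy).1)
  · intro x _
    simp

theorem dvd_sub_mul_add_of_sq_modEq {n x y m : ℤ} (hx : x ^ 2 ≡ m [ZMOD n])
    (hy : y ^ 2 ≡ m [ZMOD n]) : n ∣ (x - y) * (x + y) := by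
  rw [mul_comm, ← sq_sub_sq]
  exact (hy.trans hx.symm).dvd

theorem dvd_iff_of_sq_modEq {p k : ℕ} (hp : p.Prime) (hk : k ≠ 0) {x m : ℤ}
    (hx : x ^ 2 ≡ m [ZMOD p ^ k]) : (p : ℤ) ∣ x ↔ (p : ℤ) ∣ m :=
  ⟨fun h => ((hx.of_dvd (dvd_pow_self _ hk)).dvd_iff).mp (dvd_pow h two_ne_zero),
    fun h => Int.Prime.dvd_pow' hp (((hx.of_dvd (dvd_pow_self _ hk)).dvd_iff).mpr h)⟩

theorem pow_dvd_gcd_two_mul_sub_or_add {p : ℕ} (hp : p.Prime) {j : ℕ} {x y : ℤ}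
    (hx : ¬ (p : ℤ) ∣ x) (h : (p : ℤ) ^ j ∣ (x - y) * (x + y)) :
    (p : ℤ) ^ j ∣ (p.gcd 2 : ℕ) * (x - y) ∨
      (p : ℤ) ^ j ∣ (p.gcd 2 : ℕ) * (x + y) := by
  have hp' : Prime (p : ℤ) := Nat.prime_iff_prime_int.mp hp
  rcases hp.eq_two_or_odd' with rfl | hodd
  · simp only [Nat.gcd_self, Nat.cast_ofNat] at hx h hp' ⊢
    by_cases ha : 2 ∣ x - y
    · by_cases hb : 2 ∣ x + y
      · obtain ⟨a, ha⟩ := ha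
        obtain ⟨b, hb⟩ := hb
        -- `a + b = x` is odd, so `a` or `b` is odd
        by_cases ha' : 2 ∣ a
        · have hb' : ¬ 2 ∣ b := by omega
          refine .inl (hp'.pow_dvd_of_dvd_mul_left j hb' ?_)
          rwa [hb, show (x - y) * (2 * b) = b * (2 * (x - y)) by ring] at h
        · rw [ha, mul_assoc, mul_left_comm] at h
          exact .inr (hp'.pow_dvd_of_dvd_mul_left j ha' h)
      · exact .inl (dvd_mul_of_dvd_right (hp'.pow_dvd_of_dvd_mul_right j hb h) _)
    · exact .inr (dvd_mul_of_dvd_right (hp'.pow_dvd_of_dvd_mul_left j ha h) _)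
  · rw [Nat.Coprime.gcd_eq_one hodd.coprime_two_right, Nat.cast_one, one_mul, one_mul]
    have hp2 : ¬ (p : ℤ) ∣ 2 := fun h2 => by
      obtain rfl := (Nat.prime_dvd_prime_iff_eq hp Nat.prime_two).mp (Int.natCast_dvd_natCast.mp h2)
      exact absurd hodd (by decide)
    by_cases ha : (p : ℤ) ∣ x - y
    · have hb : ¬ (p : ℤ) ∣ x + y := fun hb => by
        rcases hp'.dvd_or_dvd (show (p : ℤ) ∣ 2 * x by
          rw [show 2 * x = x - y + (x + y) by ring]; exact dvd_add ha hb) with h2 | h2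
        exacts [hp2 h2, hx h2]
      exact .inl (hp'.pow_dvd_of_dvd_mul_right j hb h)
    · exact .inr (hp'.pow_dvd_of_dvd_mul_left j ha h)

theorem pow_dvd_gcd_two_mul_sub_or_add_of_sq_modEq {p k : ℕ} (hp : p.Prime) {x y m : ℤ}
    (hkm : k ≤ 1 ∨ ¬ (p : ℤ) ∣ m) (hx : x ^ 2 ≡ m [ZMOD p ^ k])
    (hy : y ^ 2 ≡ m [ZMOD p ^ k]) :
    (p : ℤ) ^ k ∣ (p.gcd 2 : ℕ) * (x - y) ∨
      (p : ℤ) ^ k ∣ (p.gcd 2 : ℕ) * (x + y) := by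
  rcases Nat.eq_zero_or_pos k with rfl | hk
  · simp
  rcases hkm with hk1 | hm
  · obtain rfl : k = 1 := by omega
    rw [pow_one] at hx hy ⊢
    exact ((Nat.prime_iff_prime_int.mp hp).dvd_or_dvd (dvd_sub_mul_add_of_sq_modEq hx hy)).imp
      (dvd_mul_of_dvd_right · _) (dvd_mul_of_dvd_right · _)
  · exact pow_dvd_gcd_two_mul_sub_or_add hp (mt (dvd_iff_of_sq_modEq hp hk.ne' hx).mp hm)
      (dvd_sub_mul_add_of_sq_modEq hx hy)

theorem not_sq_modEq_of_dvd_of_not_sq_dvd {p k : ℕ} (hp : p.Prime) (hk : 2 ≤ k) {x m : ℤ}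
    (hm : (p : ℤ) ∣ m) (hm2 : ¬ (p : ℤ) ^ 2 ∣ m) : ¬ x ^ 2 ≡ m [ZMOD p ^ k] := by
  intro hx
  obtain ⟨z, rfl⟩ := (dvd_iff_of_sq_modEq hp (by omega) hx).mpr hm
  have hsq : (p : ℤ) ^ 2 ∣ m - (p * z) ^ 2 := (pow_dvd_pow _ hk).trans hx.dvd
  exact hm2 (by simpa using dvd_add hsq (⟨z ^ 2, by ring⟩ : (p : ℤ) ^ 2 ∣ (p * z) ^ 2))

theorem exists_eq_mul_sq_modEq {p k : ℕ} (hp : p.Prime) (hk : 2 ≤ k) {x m : ℤ}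
    (hx : x ^ 2 ≡ p ^ 2 * m [ZMOD p ^ k]) :
    ∃ z, x = p * z ∧ z ^ 2 ≡ m [ZMOD p ^ (k - 2)] := by
  obtain ⟨z, rfl⟩ := (dvd_iff_of_sq_modEq hp (by omega) hx).mpr
    (dvd_mul_of_dvd_left (dvd_pow_self _ two_ne_zero) _)
  refine ⟨z, rfl, ?_⟩
  rw [Int.modEq_iff_dvd] at hx ⊢
  rw [← Nat.add_sub_cancel' hk, pow_add,
    show (p : ℤ) ^ 2 * m - (p * z) ^ 2 = p ^ 2 * (m - z ^ 2) by ring] at hx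
  exact (mul_dvd_mul_iff_left (pow_ne_zero 2 (Int.natCast_ne_zero.mpr hp.ne_zero))).mp hx

theorem exists_sq_dvd_gcd_and_pow_dvd_mul_sub_or_add {p : ℕ} (hp : p.Prime) (k : ℕ) (m : ℤ) :
    ∃ w, p ^ (2 * w) ∣ Nat.gcd (p ^ k) m.natAbs ∧
      ∀ x y : ℤ, x ^ 2 ≡ m [ZMOD p ^ k] → y ^ 2 ≡ m [ZMOD p ^ k] →
        (p : ℤ) ^ k ∣ (p.gcd 2 * p ^ w : ℕ) * (x - y) ∨
          (p : ℤ) ^ k ∣ (p.gcd 2 * p ^ w : ℕ) * (x + y) := by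
  induction k using Nat.strong_induction_on generalizing m with
  | _ k ih =>
  by_cases hkm : k ≤ 1 ∨ ¬ (p : ℤ) ∣ m
  · refine ⟨0, by simp, fun x y hx hy => ?_⟩
    rw [pow_zero, mul_one]
    exact pow_dvd_gcd_two_mul_sub_or_add_of_sq_modEq hp hkm hx hy
  push Not at hkm
  obtain ⟨hk, hm⟩ := hkm
  by_cases hm2 : (p : ℤ) ^ 2 ∣ m
  · obtain ⟨m', rfl⟩ := hm2
    obtain ⟨w, hw, hroots⟩ := ih (k - 2) (by omega) m'
    refine ⟨w + 1, ?_, fun x y hx hy => ?_⟩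
    · have hgcd : Nat.gcd (p ^ k) ((p : ℤ) ^ 2 * m').natAbs
          = p ^ 2 * Nat.gcd (p ^ (k - 2)) m'.natAbs := by
        rw [← Nat.gcd_mul_left, ← pow_add, Int.natAbs_mul, Int.natAbs_pow, Int.natAbs_natCast,
          Nat.add_sub_cancel' (by omega)]
      rw [hgcd, mul_add, pow_add, mul_one, mul_comm]
      exact mul_dvd_mul_left _ hw
    · obtain ⟨x', rfl, hx'⟩ := exists_eq_mul_sq_modEq hp (by omega) hx
      obtain ⟨y', rfl, hy'⟩ := exists_eq_mul_sq_modEq hp (by omega) hy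
      have hpk : (p : ℤ) ^ k = p ^ 2 * p ^ (k - 2) := by rw [← pow_add]; congr 1; omega
      have hmul : ∀ z : ℤ, ((p.gcd 2 * p ^ (w + 1) : ℕ) : ℤ) * (p * z) =
          p ^ 2 * ((p.gcd 2 * p ^ w : ℕ) * z) := fun z => by push_cast; ring
      rw [hpk, ← mul_sub, ← mul_add, hmul, hmul]
      exact (hroots x' y' hx' hy').imp (mul_dvd_mul_left _) (mul_dvd_mul_left _)
  · exact ⟨0, by simp, fun x y hx _ =>
      absurd hx (not_sq_modEq_of_dvd_of_not_sq_dvd hp (by omega) hm hm2)⟩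

theorem exists_sq_dvd_gcd_and_sqrtCount_prime_pow_le {p : ℕ} (hp : p.Prime) (k : ℕ) (m : ℤ) :
    ∃ w, p ^ (2 * w) ∣ Nat.gcd (p ^ k) m.natAbs ∧
      sqrtCount (p ^ k) m ≤ 2 * (p.gcd 2 * p ^ w) := by
  obtain ⟨w, hw, hroots⟩ := exists_sq_dvd_gcd_and_pow_dvd_mul_sub_or_add hp k m
  refine ⟨w, hw, ?_⟩
  have : NeZero (p ^ k) := ⟨pow_ne_zero _ hp.ne_zero⟩
  rw [sqrtCount, Nat.card_eq_fintype_card, Fintype.card_subtype]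
  refine card_le_two_mul_of_forall_nsmul_sub_or_add
    (Nat.mul_pos (Nat.gcd_pos_of_pos_right _ two_pos) (pow_pos hp.pos _)) _ fun x hx y hy => ?_
  obtain ⟨x, rfl⟩ := ZMod.intCast_surjective x
  obtain ⟨y, rfl⟩ := ZMod.intCast_surjective y
  simp only [mem_filter, mem_univ, true_and, ZMod.intCast_sq_eq_intCast_iff, Nat.cast_pow]
    at hx hy
  simp only [nsmul_eq_mul, ← Int.cast_natCast (R := ZMod (p ^ k)), ← Int.cast_sub,
    ← Int.cast_add, ← Int.cast_mul, ZMod.intCast_zmod_eq_zero_iff_dvd, Nat.cast_pow]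
  exact hroots x y hx hy

theorem exists_sq_dvd_gcd_and_sqrtCount_le (m : ℤ) {q : ℕ} (hq : q ≠ 0) :
    ∃ r, r ^ 2 ∣ Nat.gcd q m.natAbs ∧
      sqrtCount q m ≤ Nat.gcd q 2 * 2 ^ q.primeFactors.card * r := by
  induction q using Nat.recOnPosPrimePosCoprime with
  | prime_pow p k hp hk =>
    obtain ⟨w, hw, hcount⟩ := exists_sq_dvd_gcd_and_sqrtCount_prime_pow_le hp k m
    have hg : p.gcd 2 ≤ (p ^ k).gcd 2 :=
      Nat.le_of_dvd (Nat.gcd_pos_of_pos_right _ two_pos)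
        (Nat.gcd_dvd_gcd_of_dvd_left _ (dvd_pow_self p hk.ne'))
    refine ⟨p ^ w, by rwa [← pow_mul, mul_comm], hcount.trans ?_⟩
    rw [Nat.primeFactors_prime_pow hk.ne' hp, card_singleton, pow_one, mul_comm 2, mul_right_comm]
    gcongr
  | zero => exact absurd rfl hq
  | one =>
    refine ⟨1, by simp, ?_⟩
    simp only [sqrtCount, Nat.card_eq_fintype_card]
    simpa using (Fintype.card_subtype_le _).trans (ZMod.card 1).le
  | coprime a b ha hb hab iha ihb =>
    obtain ⟨ra, hra, hca⟩ := iha (by omega)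
    obtain ⟨rb, hrb, hcb⟩ := ihb (by omega)
    have hgcd : ∀ n, Nat.gcd (a * b) n = Nat.gcd a n * Nat.gcd b n := fun n => by
      rw [Nat.gcd_comm, hab.gcd_mul, Nat.gcd_comm n, Nat.gcd_comm n]
    refine ⟨ra * rb, by rw [hgcd, mul_pow]; exact mul_dvd_mul hra hrb, ?_⟩
    rw [sqrtCount_mul hab, hgcd, hab.primeFactors_mul,
      card_union_of_disjoint hab.disjoint_primeFactors, pow_add]
    calc sqrtCount a m * sqrtCount b m
        ≤ (a.gcd 2 * 2 ^ a.primeFactors.card * ra) * (b.gcd 2 * 2 ^ b.primeFactors.card * rb) :=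
          Nat.mul_le_mul hca hcb
      _ = _ := by ring

/-- η_q(m) ≤ gcd(q,2) · 2^{ω(q)} · √{q,m}, where {q,m} is the largest square dividing
gcd(q,m) (with gcd(q,0) = q). -/
theorem stmt2 (q : ℕ) (hq : 0 < q) (m : ℤ) :
    ((Finset.range q).filter (fun y : ℕ => ((y : ℤ) ^ 2) % (q : ℤ) = m % (q : ℤ))).card
      ≤ Nat.gcd q 2 * 2 ^ q.primeFactors.card * Nat.sqrt (sqPart (Nat.gcd q m.natAbs)) := by
  have : NeZero q := ⟨hq.ne'⟩
  obtain ⟨r, hr, hcount⟩ := exists_sq_dvd_gcd_and_sqrtCount_le m hq.ne'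
  rw [card_filter_range_eq_sqrtCount]
  exact hcount.trans <| Nat.mul_le_mul_left _ <|
    le_sqrt_sqPart (Nat.gcd_pos_of_pos_left _ hq).ne' hr
end

section
/- Let F(x,y) = x₁y₁² + x₂y₂² + x₃y₃² and D(m,n) = m₁²n₁⁴ + m₂²n₂⁴ + m₃²n₃⁴ − 2(m₁m₂n₁²n₂² + m₁m₃n₁²n₃² + m₂m₃n₂²n₃²). Then in the polynomial ring ℤ[x₁,x₂,x₃,y₁,y₂,y₃], the polynomial F(x,y) divides D(∇F(x,y)), where ∇F(x,y) = (y₁², y₂², y₃², 2x₁y₁, 2x₂y₂, 2x₃y₃). -/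
open MvPolynomial

/-- The dual sextic form D as a function of six ring elements. -/
def Dform {R : Type*} [CommRing R] (m₁ m₂ m₃ n₁ n₂ n₃ : R) : R :=
  m₁ ^ 2 * n₁ ^ 4 + m₂ ^ 2 * n₂ ^ 4 + m₃ ^ 2 * n₃ ^ 4
    - 2 * (m₁ * m₂ * n₁ ^ 2 * n₂ ^ 2 + m₁ * m₃ * n₁ ^ 2 * n₃ ^ 2 + m₂ * m₃ * n₂ ^ 2 * n₃ ^ 2)

/-- In ℤ[x₁,x₂,x₃,y₁,y₂,y₃], the cubic form F = x₁y₁²+x₂y₂²+x₃y₃² divides D(∇F), where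
∇F = (y₁², y₂², y₃², 2x₁y₁, 2x₂y₂, 2x₃y₃). Here X 0, X 1, X 2 are x₁,x₂,x₃ and
X 3, X 4, X 5 are y₁,y₂,y₃. -/
theorem stmt5 :
    (X 0 * X 3 ^ 2 + X 1 * X 4 ^ 2 + X 2 * X 5 ^ 2 : MvPolynomial (Fin 6) ℤ) ∣
      Dform (X 3 ^ 2) (X 4 ^ 2) (X 5 ^ 2) (2 * X 0 * X 3) (2 * X 1 * X 4) (2 * X 2 * X 5) := by
  refine ⟨-16 * (-(X 0 * X 3 ^ 2) + X 1 * X 4 ^ 2 + X 2 * X 5 ^ 2)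
      * (X 0 * X 3 ^ 2 - X 1 * X 4 ^ 2 + X 2 * X 5 ^ 2)
      * (X 0 * X 3 ^ 2 + X 1 * X 4 ^ 2 - X 2 * X 5 ^ 2), ?_⟩
  unfold Dform
  ring
end

section
/- Let p be a prime and j ∈ {0,1}, and let D(m,n) = Σᵢ mᵢ²nᵢ⁴ − 2Σ_{i<j} mᵢmⱼnᵢ²nⱼ² with D(m,n) ≠ 0. Let N_j(p^r) count tuples (a, y) ∈ (ℤ/p^rℤ)⁴ with p ∤ a, n·y ≡ 0 mod p^{r−j}, and ayᵢ² + mᵢ ≡ 0 mod p^r for i = 1,2,3. If r > j + v_p(D(m,n)), then N_j(p^r) = 0, where v_p denotes the p-adic valuation. -/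
/-- N_j(p^r): the number of (a, y₁, y₂, y₃) ∈ (ℤ/p^rℤ)⁴ with p ∤ a,
n·y ≡ 0 mod p^{r−j}, and a·yᵢ² + mᵢ ≡ 0 mod p^r for i = 1, 2, 3. -/
def Ncount (p r j : ℕ) (m₁ m₂ m₃ n₁ n₂ n₃ : ℤ) : ℕ :=
  ((Finset.range (p ^ r) ×ˢ Finset.range (p ^ r) ×ˢ Finset.range (p ^ r)
      ×ˢ Finset.range (p ^ r)).filter
    (fun t => ¬ p ∣ t.1 ∧
      (n₁ * (t.2.1 : ℤ) + n₂ * (t.2.2.1 : ℤ) + n₃ * (t.2.2.2 : ℤ)) % ((p : ℤ) ^ (r - j)) = 0 ∧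
      ((t.1 : ℤ) * (t.2.1 : ℤ) ^ 2 + m₁) % ((p : ℤ) ^ r) = 0 ∧
      ((t.1 : ℤ) * (t.2.2.1 : ℤ) ^ 2 + m₂) % ((p : ℤ) ^ r) = 0 ∧
      ((t.1 : ℤ) * (t.2.2.2 : ℤ) ^ 2 + m₃) % ((p : ℤ) ^ r) = 0)).card

/-- If D(m,n) ≠ 0, j ∈ {0,1} and r > j + v_p(D(m,n)), then N_j(p^r) = 0. -/
theorem stmt15 (p : ℕ) (hp : p.Prime) (j r : ℕ) (hj : j ≤ 1) (m₁ m₂ m₃ n₁ n₂ n₃ : ℤ)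
    (hD : m₁ ^ 2 * n₁ ^ 4 + m₂ ^ 2 * n₂ ^ 4 + m₃ ^ 2 * n₃ ^ 4
      - 2 * (m₁ * m₂ * n₁ ^ 2 * n₂ ^ 2 + m₁ * m₃ * n₁ ^ 2 * n₃ ^ 2
        + m₂ * m₃ * n₂ ^ 2 * n₃ ^ 2) ≠ 0)
    (hr : r > j + padicValInt p (m₁ ^ 2 * n₁ ^ 4 + m₂ ^ 2 * n₂ ^ 4 + m₃ ^ 2 * n₃ ^ 4
      - 2 * (m₁ * m₂ * n₁ ^ 2 * n₂ ^ 2 + m₁ * m₃ * n₁ ^ 2 * n₃ ^ 2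
        + m₂ * m₃ * n₂ ^ 2 * n₃ ^ 2))) :
    Ncount p r j m₁ m₂ m₃ n₁ n₂ n₃ = 0 := by
  haveI : Fact p.Prime := ⟨hp⟩
  rw [Ncount, Finset.card_eq_zero]
  by_contra hne
  obtain ⟨t, ht⟩ := Finset.nonempty_iff_ne_empty.mpr hne
  simp only [Finset.mem_filter] at ht
  obtain ⟨-, -, hs, h1, h2, h3⟩ := ht
  set a : ℤ := (t.1 : ℤ)
  set y₁ : ℤ := (t.2.1 : ℤ)
  set y₂ : ℤ := (t.2.2.1 : ℤ)
  set y₃ : ℤ := (t.2.2.2 : ℤ)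
  have hs' : (p : ℤ) ^ (r - j) ∣ n₁ * y₁ + n₂ * y₂ + n₃ * y₃ := Int.dvd_of_emod_eq_zero hs
  have h1' : (p : ℤ) ^ r ∣ a * y₁ ^ 2 + m₁ := Int.dvd_of_emod_eq_zero h1
  have h2' : (p : ℤ) ^ r ∣ a * y₂ ^ 2 + m₂ := Int.dvd_of_emod_eq_zero h2
  have h3' : (p : ℤ) ^ r ∣ a * y₃ ^ 2 + m₃ := Int.dvd_of_emod_eq_zero h3
  set x₁ : ℤ := n₁ * y₁
  set x₂ : ℤ := n₂ * y₂
  set x₃ : ℤ := n₃ * y₃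
  set D : ℤ := m₁ ^ 2 * n₁ ^ 4 + m₂ ^ 2 * n₂ ^ 4 + m₃ ^ 2 * n₃ ^ 4
      - 2 * (m₁ * m₂ * n₁ ^ 2 * n₂ ^ 2 + m₁ * m₃ * n₁ ^ 2 * n₃ ^ 2
        + m₂ * m₃ * n₂ ^ 2 * n₃ ^ 2) with hDdef
  set Q : ℤ := (x₁ - x₂ - x₃) * (x₁ - x₂ + x₃) * (x₁ + x₂ - x₃) with hQdef
  obtain ⟨k₁, hk₁⟩ := h1'
  obtain ⟨k₂, hk₂⟩ := h2'
  obtain ⟨k₃, hk₃⟩ := h3'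
  have hm₁ : m₁ = (p : ℤ) ^ r * k₁ - a * y₁ ^ 2 := by linarith
  have hm₂ : m₂ = (p : ℤ) ^ r * k₂ - a * y₂ ^ 2 := by linarith
  have hm₃ : m₃ = (p : ℤ) ^ r * k₃ - a * y₃ ^ 2 := by linarith
  have hdiff : (p : ℤ) ^ r ∣ D - a ^ 2 * ((x₁ + x₂ + x₃) * Q) := by
    refine ⟨(p : ℤ) ^ r * k₁ ^ 2 * n₁ ^ 4 + (p : ℤ) ^ r * k₂ ^ 2 * n₂ ^ 4
        + (p : ℤ) ^ r * k₃ ^ 2 * n₃ ^ 4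
        - 2 * a * y₁ ^ 2 * k₁ * n₁ ^ 4 - 2 * a * y₂ ^ 2 * k₂ * n₂ ^ 4
        - 2 * a * y₃ ^ 2 * k₃ * n₃ ^ 4
        - 2 * ((p : ℤ) ^ r * k₁ * k₂ - a * y₁ ^ 2 * k₂ - a * y₂ ^ 2 * k₁) * n₁ ^ 2 * n₂ ^ 2
        - 2 * ((p : ℤ) ^ r * k₁ * k₃ - a * y₁ ^ 2 * k₃ - a * y₃ ^ 2 * k₁) * n₁ ^ 2 * n₃ ^ 2
        - 2 * ((p : ℤ) ^ r * k₂ * k₃ - a * y₂ ^ 2 * k₃ - a * y₃ ^ 2 * k₂) * n₂ ^ 2 * n₃ ^ 2, ?_⟩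
    rw [hDdef, hQdef, hm₁, hm₂, hm₃]
    ring
  have hrj : (p : ℤ) ^ (r - j) ∣ (p : ℤ) ^ r := pow_dvd_pow _ (Nat.sub_le r j)
  have h5 : (p : ℤ) ^ (r - j) ∣ a ^ 2 * ((x₁ + x₂ + x₃) * Q) := (hs'.mul_right Q).mul_left _
  have h6 : (p : ℤ) ^ (r - j) ∣ D := by
    have := (hrj.trans hdiff).add h5
    simpa using this
  have hle : r - j ≤ padicValInt p D := by
    rcases (padicValInt_dvd_iff (r - j) D).mp h6 with h | h
    · exact absurd h hD
    · exact h
  omega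
end

section
/- Let m, n ∈ ℤ³ with mᵢnᵢ ≠ 0 for all i (equivalently m₁m₂m₃n₁n₂n₃ ≠ 0, in particular (m,n) has mⱼmₖnⱼnₖ ≠ 0 for some j < k) and suppose D(m,n) = Σᵢ mᵢ²nᵢ⁴ − 2Σ_{i<j} mᵢmⱼnᵢ²nⱼ² = 0. Then for every pair j < k with mⱼmₖnⱼnₖ ≠ 0, the product mⱼmₖ is a non-zero perfect square. -/
lemma sq_of_mul_sq (k t : ℤ) (ht : t ≠ 0) (h : IsSquare (k * t ^ 2)) :
    IsSquare k := by
  obtain ⟨s, hs⟩ := h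
  have hts : t ∣ s := by
    have hd : t ^ 2 ∣ s ^ 2 := ⟨k, by rw [sq, ← hs]; ring⟩
    exact (Int.pow_dvd_pow_iff two_ne_zero).mp hd
  obtain ⟨u, hu⟩ := hts
  refine ⟨u, ?_⟩
  have h2 : k * t ^ 2 = (u * u) * t ^ 2 := by rw [hs, hu]; ring
  exact mul_right_cancel₀ (pow_ne_zero 2 ht) h2

/-- If mᵢnᵢ ≠ 0 for all i and D(m,n) = 0, then for every pair j < k with
mⱼmₖnⱼnₖ ≠ 0, the product mⱼmₖ is a non-zero perfect square. -/
theorem stmt17 (m₁ m₂ m₃ n₁ n₂ n₃ : ℤ)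
    (h1 : m₁ * n₁ ≠ 0) (h2 : m₂ * n₂ ≠ 0) (h3 : m₃ * n₃ ≠ 0)
    (hD : m₁ ^ 2 * n₁ ^ 4 + m₂ ^ 2 * n₂ ^ 4 + m₃ ^ 2 * n₃ ^ 4
      - 2 * (m₁ * m₂ * n₁ ^ 2 * n₂ ^ 2 + m₁ * m₃ * n₁ ^ 2 * n₃ ^ 2
        + m₂ * m₃ * n₂ ^ 2 * n₃ ^ 2) = 0) :
    (m₁ * m₂ * n₁ * n₂ ≠ 0 → IsSquare (m₁ * m₂) ∧ m₁ * m₂ ≠ 0) ∧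
    (m₁ * m₃ * n₁ * n₃ ≠ 0 → IsSquare (m₁ * m₃) ∧ m₁ * m₃ ≠ 0) ∧
    (m₂ * m₃ * n₂ * n₃ ≠ 0 → IsSquare (m₂ * m₃) ∧ m₂ * m₃ ≠ 0) := by
  refine ⟨fun h => ⟨?_, ?_⟩, fun h => ⟨?_, ?_⟩, fun h => ⟨?_, ?_⟩⟩
  · refine sq_of_mul_sq _ (2 * (n₁ * n₂)) (by
      intro hc
      rcases mul_eq_zero.mp hc with hc | hc
      · norm_num at hc
      · rcases mul_eq_zero.mp hc with hc | hc
        · exact h1 (by rw [hc]; ring)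
        · exact h2 (by rw [hc]; ring)) ?_
    exact ⟨m₁ * n₁ ^ 2 + m₂ * n₂ ^ 2 - m₃ * n₃ ^ 2, by linear_combination -hD⟩
  · intro hc
    apply h
    rw [show m₁ * m₂ * n₁ * n₂ = (m₁ * m₂) * (n₁ * n₂) by ring, hc, zero_mul]
  · refine sq_of_mul_sq _ (2 * (n₁ * n₃)) (by
      intro hc
      rcases mul_eq_zero.mp hc with hc | hc
      · norm_num at hc
      · rcases mul_eq_zero.mp hc with hc | hc
        · exact h1 (by rw [hc]; ring)
        · exact h3 (by rw [hc]; ring)) ?_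
    exact ⟨m₁ * n₁ ^ 2 + m₃ * n₃ ^ 2 - m₂ * n₂ ^ 2, by linear_combination -hD⟩
  · intro hc
    apply h
    rw [show m₁ * m₃ * n₁ * n₃ = (m₁ * m₃) * (n₁ * n₃) by ring, hc, zero_mul]
  · refine sq_of_mul_sq _ (2 * (n₂ * n₃)) (by
      intro hc
      rcases mul_eq_zero.mp hc with hc | hc
      · norm_num at hc
      · rcases mul_eq_zero.mp hc with hc | hc
        · exact h2 (by rw [hc]; ring)
        · exact h3 (by rw [hc]; ring)) ?_
    exact ⟨m₂ * n₂ ^ 2 + m₃ * n₃ ^ 2 - m₁ * n₁ ^ 2, by linear_combination -hD⟩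
  · intro hc
    apply h
    rw [show m₂ * m₃ * n₂ * n₃ = (m₂ * m₃) * (n₂ * n₃) by ring, hc, zero_mul]
end

section
/- Let m, n ∈ ℤ³ with (m₁n₁, m₂n₂, m₃n₃) ≠ (0,0,0), D(m,n) = 0 (where D is the dual sextic form), and n₁n₂n₃ ≠ 0. Then there exists a unique point [t] ∈ ℙ²(ℤ) (i.e., a primitive vector t ∈ ℤ³ up to sign) such that m ∈ t²ℤ (meaning (m₁,m₂,m₃) = h·(t₁²,t₂²,t₃²) for some integer h) and n·t = 0. -/
/-!
With `aᵢ = mᵢnᵢ²`, `D(m,n)` is Heron's form `Σ aᵢ² - 2 Σ aᵢaⱼ = (a₃ - a₁ - a₂)² - 4a₁a₂`.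
Hence `a₃ - a₁ - a₂ = 2b` with `b² = a₁a₂`, and `y = (a₁, b, -a₁ - b)` (or `(0, 1, -1)` when
this vanishes) is a non-zero vector with `y₁ + y₂ + y₃ = 0` and `y²` proportional to `a`.
Then `xᵢ = yᵢ n₁n₂n₃ / nᵢ` is orthogonal to `n` with `x²` proportional to `m`, and its primitive
part `t` satisfies `m = h t²` by a Bézout relation among the coprime squares `tᵢ²`.

For uniqueness, `|h|` is the gcd of the `mᵢ` and `h` has the sign of `Σ mᵢ = h Σ tᵢ²`, so any
other solution `s` has `sᵢ = ±tᵢ`. A non-constant sign pattern would split `n·t = 0` into two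
vanishing partial sums, one of which is a single term `nᵢtᵢ`, forcing `tᵢ = 0`.
-/

def Proportional (a₁ a₂ a₃ b₁ b₂ b₃ : ℤ) : Prop :=
  a₁ * b₂ = a₂ * b₁ ∧ a₁ * b₃ = a₃ * b₁ ∧ a₂ * b₃ = a₃ * b₂

lemma exists_sum_eq_zero_proportional_sq_of_heron (a₁ a₂ a₃ : ℤ)
    (h : a₁ ^ 2 + a₂ ^ 2 + a₃ ^ 2 - 2 * (a₁ * a₂ + a₁ * a₃ + a₂ * a₃) = 0) :
    ∃ y₁ y₂ y₃ : ℤ, ¬(y₁ = 0 ∧ y₂ = 0 ∧ y₃ = 0) ∧ y₁ + y₂ + y₃ = 0 ∧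
      Proportional a₁ a₂ a₃ (y₁ ^ 2) (y₂ ^ 2) (y₃ ^ 2) := by
  have hsq : (a₃ - a₁ - a₂) ^ 2 = 4 * (a₁ * a₂) := by linear_combination h
  obtain ⟨b, hb⟩ : 2 ∣ a₃ - a₁ - a₂ :=
    Int.prime_two.dvd_of_dvd_pow (n := 2) ⟨2 * (a₁ * a₂), by rw [hsq]; ring⟩
  have hb₂ : b ^ 2 = a₁ * a₂ :=
    mul_left_cancel₀ four_ne_zero (by linear_combination hsq - (a₃ - a₁ - a₂ + 2 * b) * hb)
  by_cases h0 : a₁ = 0 ∧ b = 0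
  · obtain ⟨rfl, rfl⟩ := h0
    exact ⟨0, 1, -1, by simp, by ring, by ring, by ring, by linear_combination -hb⟩
  · refine ⟨a₁, b, -(a₁ + b), fun h' => h0 ⟨h'.1, h'.2.1⟩, by ring, ?_, ?_, ?_⟩
    · linear_combination a₁ * hb₂
    · linear_combination a₁ * hb₂ - a₁ ^ 2 * hb
    · linear_combination (-(a₁ + 2 * b)) * hb₂ - b ^ 2 * hb

lemma exists_orthogonal_proportional_sq {m₁ m₂ m₃ n₁ n₂ n₃ : ℤ}
    (hn₁ : n₁ ≠ 0) (hn₂ : n₂ ≠ 0) (hn₃ : n₃ ≠ 0)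
    (hD : m₁ ^ 2 * n₁ ^ 4 + m₂ ^ 2 * n₂ ^ 4 + m₃ ^ 2 * n₃ ^ 4
      - 2 * (m₁ * m₂ * n₁ ^ 2 * n₂ ^ 2 + m₁ * m₃ * n₁ ^ 2 * n₃ ^ 2
        + m₂ * m₃ * n₂ ^ 2 * n₃ ^ 2) = 0) :
    ∃ x₁ x₂ x₃ : ℤ, ¬(x₁ = 0 ∧ x₂ = 0 ∧ x₃ = 0) ∧ n₁ * x₁ + n₂ * x₂ + n₃ * x₃ = 0 ∧
      Proportional m₁ m₂ m₃ (x₁ ^ 2) (x₂ ^ 2) (x₃ ^ 2) := by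
  obtain ⟨y₁, y₂, y₃, hy, hsum, h₁₂, h₁₃, h₂₃⟩ :=
    exists_sum_eq_zero_proportional_sq_of_heron (m₁ * n₁ ^ 2) (m₂ * n₂ ^ 2) (m₃ * n₃ ^ 2)
      (by linear_combination hD)
  refine ⟨y₁ * n₂ * n₃, n₁ * y₂ * n₃, n₁ * n₂ * y₃, ?_, by linear_combination n₁ * n₂ * n₃ * hsum,
    by linear_combination n₃ ^ 2 * h₁₂, by linear_combination n₂ ^ 2 * h₁₃,
    by linear_combination n₁ ^ 2 * h₂₃⟩
  rintro ⟨hx₁, hx₂, hx₃⟩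
  exact hy ⟨by simpa [hn₂, hn₃] using hx₁, by simpa [hn₁, hn₃] using hx₂,
    by simpa [hn₁, hn₂] using hx₃⟩

lemma exists_eq_mul_gcd_eq_one (x₁ x₂ x₃ : ℤ) (hx : ¬(x₁ = 0 ∧ x₂ = 0 ∧ x₃ = 0)) :
    ∃ g t₁ t₂ t₃ : ℤ, g ≠ 0 ∧ Int.gcd (Int.gcd t₁ t₂) t₃ = 1 ∧
      x₁ = g * t₁ ∧ x₂ = g * t₂ ∧ x₃ = g * t₃ := by
  set g : ℤ := ((Int.gcd (Int.gcd x₁ x₂) x₃ : ℕ) : ℤ) with hg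
  have hg₀ : g ≠ 0 := by simpa [hg, Int.gcd_eq_zero_iff, and_assoc] using hx
  have hg₁₂ : g ∣ Int.gcd x₁ x₂ := Int.gcd_dvd_left _ _
  have hg₁ : g ∣ x₁ := hg₁₂.trans (Int.gcd_dvd_left _ _)
  have hg₂ : g ∣ x₂ := hg₁₂.trans (Int.gcd_dvd_right _ _)
  have hg₃ : g ∣ x₃ := Int.gcd_dvd_right _ _
  refine ⟨g, x₁ / g, x₂ / g, x₃ / g, hg₀, ?_, (Int.mul_ediv_cancel' hg₁).symm,
    (Int.mul_ediv_cancel' hg₂).symm, (Int.mul_ediv_cancel' hg₃).symm⟩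
  have habs : (g.natAbs : ℤ) = g := Int.natAbs_of_nonneg (Int.natCast_nonneg _)
  rw [Int.gcd_div hg₁ hg₂, Int.natCast_div, habs, Int.gcd_div hg₁₂ hg₃, hg, Int.natAbs_natCast]
  exact Nat.div_self (Nat.pos_of_ne_zero (Nat.cast_ne_zero.mp hg₀))

lemma gcd_gcd_sq_eq_one {t₁ t₂ t₃ : ℤ} (ht : Int.gcd (Int.gcd t₁ t₂) t₃ = 1) :
    Int.gcd (Int.gcd (t₁ ^ 2) (t₂ ^ 2)) (t₃ ^ 2) = 1 := by
  rw [Int.pow_gcd_pow, Nat.cast_pow, Int.pow_gcd_pow, ht, one_pow]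

lemma exists_eq_mul_of_proportional {m₁ m₂ m₃ v₁ v₂ v₃ : ℤ}
    (hv : Int.gcd (Int.gcd v₁ v₂) v₃ = 1) (hmv : Proportional m₁ m₂ m₃ v₁ v₂ v₃) :
    ∃ h : ℤ, m₁ = h * v₁ ∧ m₂ = h * v₂ ∧ m₃ = h * v₃ := by
  obtain ⟨h₁₂, h₁₃, h₂₃⟩ := hmv
  set a := Int.gcdA v₁ v₂
  set b := Int.gcdB v₁ v₂
  set A := Int.gcdA (Int.gcd v₁ v₂) v₃
  set B := Int.gcdB (Int.gcd v₁ v₂) v₃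
  have hbezout : (v₁ * a + v₂ * b) * A + v₃ * B = 1 := by
    rw [← Int.gcd_eq_gcd_ab, ← Int.gcd_eq_gcd_ab, hv, Nat.cast_one]
  refine ⟨(m₁ * a + m₂ * b) * A + m₃ * B, ?_, ?_, ?_⟩
  · linear_combination (-m₁) * hbezout + b * A * h₁₂ + B * h₁₃
  · linear_combination (-m₂) * hbezout - a * A * h₁₂ + B * h₂₃
  · linear_combination (-m₃) * hbezout - a * A * h₁₃ - b * A * h₂₃

lemma exists_gcd_eq_one_orthogonal_proportional_sq {m₁ m₂ m₃ n₁ n₂ n₃ : ℤ}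
    (hn₁ : n₁ ≠ 0) (hn₂ : n₂ ≠ 0) (hn₃ : n₃ ≠ 0)
    (hD : m₁ ^ 2 * n₁ ^ 4 + m₂ ^ 2 * n₂ ^ 4 + m₃ ^ 2 * n₃ ^ 4
      - 2 * (m₁ * m₂ * n₁ ^ 2 * n₂ ^ 2 + m₁ * m₃ * n₁ ^ 2 * n₃ ^ 2
        + m₂ * m₃ * n₂ ^ 2 * n₃ ^ 2) = 0) :
    ∃ t₁ t₂ t₃ : ℤ, Int.gcd (Int.gcd t₁ t₂) t₃ = 1 ∧ n₁ * t₁ + n₂ * t₂ + n₃ * t₃ = 0 ∧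
      Proportional m₁ m₂ m₃ (t₁ ^ 2) (t₂ ^ 2) (t₃ ^ 2) := by
  obtain ⟨x₁, x₂, x₃, hx, hnx, h₁₂, h₁₃, h₂₃⟩ := exists_orthogonal_proportional_sq hn₁ hn₂ hn₃ hD
  obtain ⟨g, t₁, t₂, t₃, hg, ht, rfl, rfl, rfl⟩ := exists_eq_mul_gcd_eq_one x₁ x₂ x₃ hx
  have hg₂ : g ^ 2 ≠ 0 := pow_ne_zero 2 hg
  refine ⟨t₁, t₂, t₃, ht, mul_left_cancel₀ hg (by linear_combination hnx),
    mul_left_cancel₀ hg₂ ?_, mul_left_cancel₀ hg₂ ?_, mul_left_cancel₀ hg₂ ?_⟩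
  · linear_combination h₁₂
  · linear_combination h₁₃
  · linear_combination h₂₃

lemma gcd_gcd_mul_sq_eq_natAbs {t₁ t₂ t₃ : ℤ} (ht : Int.gcd (Int.gcd t₁ t₂) t₃ = 1) (c : ℤ) :
    Int.gcd (Int.gcd (c * t₁ ^ 2) (c * t₂ ^ 2)) (c * t₃ ^ 2) = c.natAbs := by
  have := gcd_gcd_sq_eq_one ht
  simp only [Int.gcd, Int.natAbs_mul, Int.natAbs_natCast, Nat.gcd_mul_left] at this ⊢
  rw [this, mul_one]

lemma eq_of_mul_sq_eq_mul_sq {h h' t₁ t₂ t₃ s₁ s₂ s₃ : ℤ}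
    (ht : Int.gcd (Int.gcd t₁ t₂) t₃ = 1) (hs : Int.gcd (Int.gcd s₁ s₂) s₃ = 1)
    (h₁ : h * t₁ ^ 2 = h' * s₁ ^ 2) (h₂ : h * t₂ ^ 2 = h' * s₂ ^ 2)
    (h₃ : h * t₃ ^ 2 = h' * s₃ ^ 2) : h = h' := by
  have habs : h.natAbs = h'.natAbs := by
    rw [← gcd_gcd_mul_sq_eq_natAbs ht, ← gcd_gcd_mul_sq_eq_natAbs hs, h₁, h₂, h₃]
  rcases Int.natAbs_eq_natAbs_iff.mp habs with rfl | rfl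
  · rfl
  have hpos : 0 < t₁ ^ 2 + t₂ ^ 2 + t₃ ^ 2 + s₁ ^ 2 + s₂ ^ 2 + s₃ ^ 2 := by
    have ht₀ : t₁ ≠ 0 ∨ t₂ ≠ 0 ∨ t₃ ≠ 0 := by
      by_contra! h₀
      simp [h₀.1, h₀.2.1, h₀.2.2] at ht
    rcases ht₀ with h₀ | h₀ | h₀ <;> positivity
  have : h' * (t₁ ^ 2 + t₂ ^ 2 + t₃ ^ 2 + s₁ ^ 2 + s₂ ^ 2 + s₃ ^ 2) = 0 := by
    linear_combination -(h₁ + h₂ + h₃)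
  simp [(mul_eq_zero.mp this).resolve_right hpos.ne']

lemma triple_eq_or_eq_neg_of_sq_eq_sq {n₁ n₂ n₃ s₁ s₂ s₃ t₁ t₂ t₃ : ℤ}
    (hn₁ : n₁ ≠ 0) (hn₂ : n₂ ≠ 0) (hn₃ : n₃ ≠ 0)
    (h₁ : s₁ ^ 2 = t₁ ^ 2) (h₂ : s₂ ^ 2 = t₂ ^ 2) (h₃ : s₃ ^ 2 = t₃ ^ 2)
    (hs : n₁ * s₁ + n₂ * s₂ + n₃ * s₃ = 0) (ht : n₁ * t₁ + n₂ * t₂ + n₃ * t₃ = 0) :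
    (s₁, s₂, s₃) = (t₁, t₂, t₃) ∨ (s₁, s₂, s₃) = (-t₁, -t₂, -t₃) := by
  rw [sq_eq_sq_iff_eq_or_eq_neg] at h₁ h₂ h₃
  grind [mul_eq_zero]

/-- If (m₁n₁, m₂n₂, m₃n₃) ≠ (0,0,0), D(m,n) = 0 and n₁n₂n₃ ≠ 0, then there is a
primitive integer vector t, unique up to sign, with m ∈ t²ℤ and n·t = 0. -/
theorem stmt18 (m₁ m₂ m₃ n₁ n₂ n₃ : ℤ)
    (hmn : ¬ (m₁ * n₁ = 0 ∧ m₂ * n₂ = 0 ∧ m₃ * n₃ = 0))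
    (hD : m₁ ^ 2 * n₁ ^ 4 + m₂ ^ 2 * n₂ ^ 4 + m₃ ^ 2 * n₃ ^ 4
      - 2 * (m₁ * m₂ * n₁ ^ 2 * n₂ ^ 2 + m₁ * m₃ * n₁ ^ 2 * n₃ ^ 2
        + m₂ * m₃ * n₂ ^ 2 * n₃ ^ 2) = 0)
    (hn : n₁ * n₂ * n₃ ≠ 0) :
    ∃ t₁ t₂ t₃ : ℤ,
      (Int.gcd (Int.gcd t₁ t₂) t₃ = 1 ∧
        (∃ h : ℤ, m₁ = h * t₁ ^ 2 ∧ m₂ = h * t₂ ^ 2 ∧ m₃ = h * t₃ ^ 2) ∧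
        n₁ * t₁ + n₂ * t₂ + n₃ * t₃ = 0) ∧
      ∀ s₁ s₂ s₃ : ℤ,
        (Int.gcd (Int.gcd s₁ s₂) s₃ = 1 ∧
          (∃ h : ℤ, m₁ = h * s₁ ^ 2 ∧ m₂ = h * s₂ ^ 2 ∧ m₃ = h * s₃ ^ 2) ∧
          n₁ * s₁ + n₂ * s₂ + n₃ * s₃ = 0) →
        ((s₁, s₂, s₃) = (t₁, t₂, t₃) ∨ (s₁, s₂, s₃) = (-t₁, -t₂, -t₃)) := by
  have hn₁ : n₁ ≠ 0 := left_ne_zero_of_mul (left_ne_zero_of_mul hn)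
  have hn₂ : n₂ ≠ 0 := right_ne_zero_of_mul (left_ne_zero_of_mul hn)
  have hn₃ : n₃ ≠ 0 := right_ne_zero_of_mul hn
  obtain ⟨t₁, t₂, t₃, ht, hnt, hmt⟩ :=
    exists_gcd_eq_one_orthogonal_proportional_sq hn₁ hn₂ hn₃ hD
  obtain ⟨h, hm₁, hm₂, hm₃⟩ := exists_eq_mul_of_proportional (gcd_gcd_sq_eq_one ht) hmt
  refine ⟨t₁, t₂, t₃, ⟨ht, ⟨h, hm₁, hm₂, hm₃⟩, hnt⟩, ?_⟩
  rintro s₁ s₂ s₃ ⟨hs, ⟨h', hs₁, hs₂, hs₃⟩, hns⟩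
  obtain rfl : h = h' := eq_of_mul_sq_eq_mul_sq ht hs (hm₁ ▸ hs₁) (hm₂ ▸ hs₂) (hm₃ ▸ hs₃)
  have hh : h ≠ 0 := by
    rintro rfl
    exact hmn ⟨by simp [hm₁], by simp [hm₂], by simp [hm₃]⟩
  exact triple_eq_or_eq_neg_of_sq_eq_sq hn₁ hn₂ hn₃ (mul_left_cancel₀ hh (hs₁ ▸ hm₁))
    (mul_left_cancel₀ hh (hs₂ ▸ hm₂)) (mul_left_cancel₀ hh (hs₃ ▸ hm₃)) hns hnt
end
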